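/- arXiv:2008.07463 — 10 statements merged into one kernel-verified Lean document; each statement's English description precedes it below -/
import Mathlib

section
/- Let φ be an LTL_P formula over a set V of propositional variables. Then φ is satisfiable over the integers (i.e., M,0 ⊨ φ for some ℤ-model M) if and only if its pure-future translation φ^ℕ is satisfiable over the natural numbers (i.e., N,0 ⊨ φ^ℕ for some ℕ-model N over the extended alphabet Σ_φ). -/
/-- LTL_P formulas over propositional variables `V`:
`p | ¬φ | φ₁ ∧ φ₂ | ◯_F φ | ◯_P φ | ◇_F φ | ◇_P φ`. -/
inductive LTLP (V : Type) : Type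
  | var   : V → LTLP V
  | neg   : LTLP V → LTLP V
  | conj  : LTLP V → LTLP V → LTLP V
  | nextF : LTLP V → LTLP V
  | nextP : LTLP V → LTLP V
  | diaF  : LTLP V → LTLP V
  | diaP  : LTLP V → LTLP V
  deriving DecidableEq

/-- Satisfaction `M,n ⊨ φ` of an LTL_P formula in a ℤ-model `M : ℤ → V → Prop`. -/
def ZSat {V : Type} (M : ℤ → V → Prop) : ℤ → LTLP V → Prop
  | n, .var p    => M n p
  | n, .neg ψ    => ¬ ZSat M n ψ
  | n, .conj ψ χ => ZSat M n ψ ∧ ZSat M n χ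
  | n, .nextF ψ  => ZSat M (n + 1) ψ
  | n, .nextP ψ  => ZSat M (n - 1) ψ
  | n, .diaF ψ   => ∃ m, n ≤ m ∧ ZSat M m ψ
  | n, .diaP ψ   => ∃ m, m ≤ n ∧ ZSat M m ψ

/-- Pure-future LTL formulas (no past operators). -/
inductive LTLF (W : Type) : Type
  | var   : W → LTLF W
  | neg   : LTLF W → LTLF W
  | conj  : LTLF W → LTLF W → LTLF W
  | nextF : LTLF W → LTLF W
  | diaF  : LTLF W → LTLF W
  deriving DecidableEq

/-- Satisfaction `N,n ⊨ φ` of a pure-future formula in an ℕ-model `N : ℕ → W → Prop`. -/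
def NSat {W : Type} (N : ℕ → W → Prop) : ℕ → LTLF W → Prop
  | n, .var p    => N n p
  | n, .neg ψ    => ¬ NSat N n ψ
  | n, .conj ψ χ => NSat N n ψ ∧ NSat N n χ
  | n, .nextF ψ  => NSat N (n + 1) ψ
  | n, .diaF ψ   => ∃ m, n ≤ m ∧ NSat N m ψ

/-- The extended alphabet Σ_φ: variables `p₊`, `p₋` for propositional variables `p`,
and `A₊^{Oψ}`, `A₋^{Oψ}` indexed by (temporal) formulas `Oψ`. -/
inductive Alph (V : Type) : Type
  | pos  : V → Alph V
  | negv : V → Alph V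
  | Apos : LTLP V → Alph V
  | Aneg : LTLP V → Alph V
  deriving DecidableEq

/-- `ξ.isTemporal` holds iff the outermost symbol of `ξ` is a temporal operator. -/
def LTLP.isTemporal {V : Type} : LTLP V → Prop
  | .nextF _ => True
  | .nextP _ => True
  | .diaF _  => True
  | .diaP _  => True
  | _        => False

/-- The translation `ξ̄_∗` (`s = true` for `∗ = +`, `s = false` for `∗ = −`):
a propositional formula over `Alph V`. -/
def bar {V : Type} (s : Bool) : LTLP V → LTLF (Alph V)
  | .var p    => .var (if s then .pos p else .negv p)
  | .neg ψ    => .neg (bar s ψ)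
  | .conj ψ χ => .conj (bar s ψ) (bar s χ)
  | .nextF ψ  => .var (if s then .Apos (.nextF ψ) else .Aneg (.nextF ψ))
  | .nextP ψ  => .var (if s then .Apos (.nextP ψ) else .Aneg (.nextP ψ))
  | .diaF ψ   => .var (if s then .Apos (.diaF ψ) else .Aneg (.diaF ψ))
  | .diaP ψ   => .var (if s then .Apos (.diaP ψ) else .Aneg (.diaP ψ))

/-- The set `sub φ` of subformulas of `φ`. -/
def subFmls {V : Type} : LTLP V → Set (LTLP V)
  | .var p    => {LTLP.var p}
  | .neg ψ    => insert (.neg ψ) (subFmls ψ)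
  | .conj ψ χ => insert (.conj ψ χ) (subFmls ψ ∪ subFmls χ)
  | .nextF ψ  => insert (.nextF ψ) (subFmls ψ)
  | .nextP ψ  => insert (.nextP ψ) (subFmls ψ)
  | .diaF ψ   => insert (.diaF ψ) (subFmls ψ)
  | .diaP ψ   => insert (.diaP ψ) (subFmls ψ)

/-- The induced ℕ-model `M′` over `Alph V` of a ℤ-model `M`. -/
def induced {V : Type} (M : ℤ → V → Prop) : ℕ → Alph V → Prop
  | n, .pos p  => M (n : ℤ) p
  | n, .negv p => M (-(n : ℤ)) p
  | n, .Apos ξ => ZSat M (n : ℤ) ξ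
  | n, .Aneg ξ => ZSat M (-(n : ℤ)) ξ

/-- The conjunct of part (iii) of the pure-future translation associated with a temporal
subformula, evaluated at time `n` (trivial for non-temporal formulas). -/
def ClauseAt {V : Type} (N : ℕ → Alph V → Prop) (n : ℕ) : LTLP V → Prop
  | .nextF ψ =>
      (N (n + 1) (.Aneg (.nextF ψ)) ↔ NSat N n (bar false ψ)) ∧
      (N n (.Apos (.nextF ψ)) ↔ NSat N (n + 1) (bar true ψ))
  | .nextP ψ =>
      (N (n + 1) (.Apos (.nextP ψ)) ↔ NSat N n (bar true ψ)) ∧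
      (N n (.Aneg (.nextP ψ)) ↔ NSat N (n + 1) (bar false ψ))
  | .diaF ψ =>
      (N (n + 1) (.Aneg (.diaF ψ)) ↔ (N n (.Aneg (.diaF ψ)) ∨ NSat N (n + 1) (bar false ψ))) ∧
      (N n (.Apos (.diaF ψ)) ↔ ∃ m, n ≤ m ∧ NSat N m (bar true ψ))
  | .diaP ψ =>
      (N (n + 1) (.Apos (.diaP ψ)) ↔ (N n (.Apos (.diaP ψ)) ∨ NSat N (n + 1) (bar true ψ))) ∧
      (N n (.Aneg (.diaP ψ)) ↔ ∃ m, n ≤ m ∧ NSat N m (bar false ψ))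
  | _ => True

/-- `N,0 ⊨ φ^ℕ`: satisfaction at time 0 of the pure-future translation of `φ`, i.e. the
conjunction of (i) `φ̄₊`, (ii) `v₊ ↔ v₋` at time 0 for all variable pairs of Σ_φ, and
(iii) `□_F` of the clauses for all temporal subformulas of `φ` (so: the clauses hold at all
`n ∈ ℕ`). -/
def SatPF {V : Type} (N : ℕ → Alph V → Prop) (φ : LTLP V) : Prop :=
  NSat N 0 (bar true φ) ∧
  (∀ p : V, LTLP.var p ∈ subFmls φ → (N 0 (.pos p) ↔ N 0 (.negv p))) ∧
  (∀ ξ ∈ subFmls φ, ξ.isTemporal → (N 0 (.Apos ξ) ↔ N 0 (.Aneg ξ))) ∧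
  (∀ n : ℕ, ∀ ξ ∈ subFmls φ, ClauseAt N n ξ)

/-! ### Auxiliary lemmas for the equisatisfiability theorem -/

private lemma mem_subFmls_self {V : Type} (ξ : LTLP V) : ξ ∈ subFmls ξ := by
  cases ξ <;> simp [subFmls]

private lemma subFmls_trans {V : Type} (φ : LTLP V) :
    ∀ ξ : LTLP V, ξ ∈ subFmls φ → subFmls ξ ⊆ subFmls φ := by
  induction φ with
  | var p =>
      intro ξ h; simp [subFmls] at h; subst h; simp [subFmls]
  | neg ψ ih =>
      intro ξ h
      rcases h with h | h
      · subst h; exact le_refl _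
      · exact (ih ξ h).trans (Set.subset_insert _ _)
  | conj ψ χ ihψ ihχ =>
      intro ξ h
      rcases h with h | h
      · subst h; exact le_refl _
      · rcases h with h | h
        · exact (ihψ ξ h).trans ((Set.subset_union_left).trans (Set.subset_insert _ _))
        · exact (ihχ ξ h).trans ((Set.subset_union_right).trans (Set.subset_insert _ _))
  | nextF ψ ih =>
      intro ξ h
      rcases h with h | h
      · subst h; exact le_refl _
      · exact (ih ξ h).trans (Set.subset_insert _ _)
  | nextP ψ ih =>
      intro ξ h
      rcases h with h | h
      · subst h; exact le_refl _
      · exact (ih ξ h).trans (Set.subset_insert _ _)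
  | diaF ψ ih =>
      intro ξ h
      rcases h with h | h
      · subst h; exact le_refl _
      · exact (ih ξ h).trans (Set.subset_insert _ _)
  | diaP ψ ih =>
      intro ξ h
      rcases h with h | h
      · subst h; exact le_refl _
      · exact (ih ξ h).trans (Set.subset_insert _ _)

private lemma rec_accum (A Q : ℕ → Prop) (h : ∀ k, A (k + 1) ↔ (A k ∨ Q (k + 1))) :
    ∀ n, A n ↔ (A 0 ∨ ∃ k, 1 ≤ k ∧ k ≤ n ∧ Q k) := by
  intro n
  induction n with
  | zero =>
      constructor
      · exact fun h0 => Or.inl h0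
      · rintro (h0 | ⟨k, hk1, hk0, _⟩)
        · exact h0
        · omega
  | succ n ih =>
      rw [h n, ih]
      constructor
      · rintro ((h0 | ⟨k, hk1, hkn, hq⟩) | hq)
        · exact Or.inl h0
        · exact Or.inr ⟨k, hk1, by omega, hq⟩
        · exact Or.inr ⟨n + 1, by omega, le_refl _, hq⟩
      · rintro (h0 | ⟨k, hk1, hkn, hq⟩)
        · exact Or.inl (Or.inl h0)
        · rcases Nat.lt_or_ge k (n + 1) with hlt | hge
          · exact Or.inl (Or.inr ⟨k, hk1, by omega, hq⟩)
          · have hk : k = n + 1 := by omega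
            subst hk; exact Or.inr hq

private lemma z_exists_ge (P : ℤ → Prop) (n : ℕ) :
    (∃ m : ℤ, (n : ℤ) ≤ m ∧ P m) ↔ ∃ m : ℕ, n ≤ m ∧ P (m : ℤ) := by
  constructor
  · rintro ⟨m, hm, hp⟩
    refine ⟨m.toNat, by omega, ?_⟩
    rwa [Int.toNat_of_nonneg (by omega)]
  · rintro ⟨m, hm, hp⟩
    exact ⟨m, by exact_mod_cast hm, hp⟩

private lemma z_exists_le_neg (P : ℤ → Prop) (n : ℕ) :
    (∃ m : ℤ, m ≤ -(n : ℤ) ∧ P m) ↔ ∃ k : ℕ, n ≤ k ∧ P (-(k : ℤ)) := by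
  constructor
  · rintro ⟨m, hm, hp⟩
    refine ⟨(-m).toNat, by omega, ?_⟩
    have : (((-m).toNat : ℤ)) = -m := Int.toNat_of_nonneg (by omega)
    rw [this, neg_neg]; exact hp
  · rintro ⟨k, hk, hp⟩
    exact ⟨-(k : ℤ), by omega, hp⟩

private lemma step_ge_neg (P : ℤ → Prop) (n : ℕ) :
    (∃ m : ℤ, -((n : ℤ) + 1) ≤ m ∧ P m) ↔
      ((∃ m : ℤ, -(n : ℤ) ≤ m ∧ P m) ∨ P (-((n : ℤ) + 1))) := by
  constructor
  · rintro ⟨m, hm, hp⟩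
    rcases eq_or_lt_of_le hm with h | h
    · exact Or.inr (h ▸ hp)
    · exact Or.inl ⟨m, by omega, hp⟩
  · rintro (⟨m, hm, hp⟩ | hp)
    · exact ⟨m, by omega, hp⟩
    · exact ⟨-((n : ℤ) + 1), le_refl _, hp⟩

private lemma step_le (P : ℤ → Prop) (n : ℕ) :
    (∃ m : ℤ, m ≤ (n : ℤ) + 1 ∧ P m) ↔
      ((∃ m : ℤ, m ≤ (n : ℤ) ∧ P m) ∨ P ((n : ℤ) + 1)) := by
  constructor
  · rintro ⟨m, hm, hp⟩
    rcases eq_or_lt_of_le hm with h | h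
    · exact Or.inr (h ▸ hp)
    · exact Or.inl ⟨m, by omega, hp⟩
  · rintro (⟨m, hm, hp⟩ | hp)
    · exact ⟨m, by omega, hp⟩
    · exact ⟨(n : ℤ) + 1, le_refl _, hp⟩

private lemma split_ge_neg (P : ℤ → Prop) (n : ℕ) :
    (∃ m : ℤ, -(n : ℤ) ≤ m ∧ P m) ↔
      ((∃ m : ℕ, P (m : ℤ)) ∨ ∃ k : ℕ, 1 ≤ k ∧ k ≤ n ∧ P (-(k : ℤ))) := by
  constructor
  · rintro ⟨m, hm, hp⟩
    rcases le_or_gt 0 m with h | h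
    · exact Or.inl ⟨m.toNat, by rwa [Int.toNat_of_nonneg h]⟩
    · refine Or.inr ⟨(-m).toNat, by omega, by omega, ?_⟩
      have : (((-m).toNat : ℤ)) = -m := Int.toNat_of_nonneg (by omega)
      rw [this, neg_neg]; exact hp
  · rintro (⟨m, hp⟩ | ⟨k, hk1, hkn, hp⟩)
    · exact ⟨(m : ℤ), by omega, hp⟩
    · exact ⟨-(k : ℤ), by omega, hp⟩

private lemma split_le (P : ℤ → Prop) (n : ℕ) :
    (∃ m : ℤ, m ≤ (n : ℤ) ∧ P m) ↔
      ((∃ m : ℕ, P (-(m : ℤ))) ∨ ∃ k : ℕ, 1 ≤ k ∧ k ≤ n ∧ P (k : ℤ)) := by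
  constructor
  · rintro ⟨m, hm, hp⟩
    rcases le_or_gt 0 m with h | h
    · rcases Nat.eq_zero_or_pos m.toNat with h0 | h0
      · refine Or.inl ⟨0, ?_⟩
        have : m = 0 := by omega
        simpa [this] using hp
      · refine Or.inr ⟨m.toNat, by omega, by omega, ?_⟩
        rwa [Int.toNat_of_nonneg h]
    · refine Or.inl ⟨(-m).toNat, ?_⟩
      have : (((-m).toNat : ℤ)) = -m := Int.toNat_of_nonneg (by omega)
      rw [this, neg_neg]; exact hp
  · rintro (⟨m, hp⟩ | ⟨k, hk1, hkn, hp⟩)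
    · exact ⟨-(m : ℤ), by omega, hp⟩
    · exact ⟨(k : ℤ), by omega, hp⟩

private lemma induced_bar {V : Type} (M : ℤ → V → Prop) :
    ∀ ξ : LTLP V, ∀ n : ℕ,
      (NSat (induced M) n (bar true ξ) ↔ ZSat M (n : ℤ) ξ) ∧
      (NSat (induced M) n (bar false ξ) ↔ ZSat M (-(n : ℤ)) ξ) := by
  intro ξ
  induction ξ with
  | var p => intro n; simp [bar, NSat, induced, ZSat]
  | neg ψ ih => intro n; simp [bar, NSat, ZSat, (ih n).1, (ih n).2]
  | conj ψ χ ihψ ihχ =>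
      intro n; simp [bar, NSat, ZSat, (ihψ n).1, (ihψ n).2, (ihχ n).1, (ihχ n).2]
  | nextF ψ ih => intro n; simp [bar, NSat, induced]
  | nextP ψ ih => intro n; simp [bar, NSat, induced]
  | diaF ψ ih => intro n; simp [bar, NSat, induced]
  | diaP ψ ih => intro n; simp [bar, NSat, induced]

private lemma induced_clauses {V : Type} (M : ℤ → V → Prop) (n : ℕ) (ξ : LTLP V) :
    ClauseAt (induced M) n ξ := by
  cases ξ with
  | var p => trivial
  | neg ψ => trivial
  | conj ψ χ => trivial
  | nextF ψ =>
      refine ⟨?_, ?_⟩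
      · show ZSat M (-((n + 1 : ℕ) : ℤ) + 1) ψ ↔ _
        have : -((n + 1 : ℕ) : ℤ) + 1 = -(n : ℤ) := by push_cast; ring
        rw [this]
        exact (induced_bar M ψ n).2.symm
      · show ZSat M ((n : ℕ) : ℤ) (.nextF ψ) ↔ _
        show ZSat M ((n : ℤ) + 1) ψ ↔ _
        have : ((n : ℤ) + 1) = ((n + 1 : ℕ) : ℤ) := by push_cast; ring
        rw [this]
        exact (induced_bar M ψ (n + 1)).1.symm
  | nextP ψ =>
      refine ⟨?_, ?_⟩
      · show ZSat M (((n + 1 : ℕ) : ℤ)) (.nextP ψ) ↔ _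
        show ZSat M (((n + 1 : ℕ) : ℤ) - 1) ψ ↔ _
        have : ((n + 1 : ℕ) : ℤ) - 1 = (n : ℤ) := by push_cast; ring
        rw [this]
        exact (induced_bar M ψ n).1.symm
      · show ZSat M (-((n : ℕ) : ℤ)) (.nextP ψ) ↔ _
        show ZSat M (-((n : ℕ) : ℤ) - 1) ψ ↔ _
        have : -((n : ℕ) : ℤ) - 1 = -((n + 1 : ℕ) : ℤ) := by push_cast; ring
        rw [this]
        exact (induced_bar M ψ (n + 1)).2.symm
  | diaF ψ =>
      refine ⟨?_, ?_⟩
      · show ZSat M (-((n + 1 : ℕ) : ℤ)) (.diaF ψ) ↔ _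
        show (∃ m : ℤ, -((n + 1 : ℕ) : ℤ) ≤ m ∧ ZSat M m ψ) ↔ _
        have hcast : -((n + 1 : ℕ) : ℤ) = -((n : ℤ) + 1) := by push_cast; ring
        rw [hcast, step_ge_neg (fun m => ZSat M m ψ) n]
        constructor
        · rintro (h | h)
          · exact Or.inl h
          · refine Or.inr ((induced_bar M ψ (n + 1)).2.mpr ?_)
            have : -(((n + 1 : ℕ) : ℤ)) = -((n : ℤ) + 1) := by push_cast; ring
            rw [this]; exact h
        · rintro (h | h)
          · exact Or.inl h
          · refine Or.inr ?_
            have := (induced_bar M ψ (n + 1)).2.mp h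
            have hc : -(((n + 1 : ℕ) : ℤ)) = -((n : ℤ) + 1) := by push_cast; ring
            rwa [hc] at this
      · show ZSat M ((n : ℕ) : ℤ) (.diaF ψ) ↔ _
        show (∃ m : ℤ, (n : ℤ) ≤ m ∧ ZSat M m ψ) ↔ _
        rw [z_exists_ge (fun m => ZSat M m ψ) n]
        exact exists_congr fun m => and_congr_right fun _ => (induced_bar M ψ m).1.symm
  | diaP ψ =>
      refine ⟨?_, ?_⟩
      · show ZSat M (((n + 1 : ℕ) : ℤ)) (.diaP ψ) ↔ _
        show (∃ m : ℤ, m ≤ ((n + 1 : ℕ) : ℤ) ∧ ZSat M m ψ) ↔ _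
        have hcast : ((n + 1 : ℕ) : ℤ) = (n : ℤ) + 1 := by push_cast; ring
        rw [hcast, step_le (fun m => ZSat M m ψ) n]
        constructor
        · rintro (h | h)
          · exact Or.inl h
          · refine Or.inr ((induced_bar M ψ (n + 1)).1.mpr ?_)
            rw [hcast]; exact h
        · rintro (h | h)
          · exact Or.inl h
          · refine Or.inr ?_
            have := (induced_bar M ψ (n + 1)).1.mp h
            rwa [hcast] at this
      · show ZSat M (-((n : ℕ) : ℤ)) (.diaP ψ) ↔ _
        show (∃ m : ℤ, m ≤ -((n : ℕ) : ℤ) ∧ ZSat M m ψ) ↔ _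
        rw [z_exists_le_neg (fun m => ZSat M m ψ) n]
        exact exists_congr fun k => and_congr_right fun _ => (induced_bar M ψ k).2.symm

/-- The ℤ-model extracted from an ℕ-model over the extended alphabet. -/
private def Mdef {V : Type} (N : ℕ → Alph V → Prop) : ℤ → V → Prop :=
  fun n p => if 0 ≤ n then N n.toNat (.pos p) else N (-n).toNat (.negv p)

private lemma back_main {V : Type} (N : ℕ → Alph V → Prop) (φ : LTLP V) (h : SatPF N φ) :
    ∀ ξ ∈ subFmls φ, ∀ n : ℕ,
      (ZSat (Mdef N) (n : ℤ) ξ ↔ NSat N n (bar true ξ)) ∧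
      (ZSat (Mdef N) (-(n : ℤ)) ξ ↔ NSat N n (bar false ξ)) := by
  obtain ⟨-, hvar, hzero, hcl⟩ := h
  intro ξ
  induction ξ with
  | var p =>
      intro hmem n
      constructor
      · show Mdef N (n : ℤ) p ↔ N n (.pos p)
        simp [Mdef]
      · show Mdef N (-(n : ℤ)) p ↔ N n (.negv p)
        cases n with
        | zero => simpa [Mdef] using hvar p hmem
        | succ k =>
            have hneg : ¬ (0 : ℤ) ≤ -((k + 1 : ℕ) : ℤ) := by omega
            simp only [Mdef, if_neg hneg, neg_neg, Int.toNat_natCast]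
  | neg ψ ih =>
      intro hmem n
      have hψ : ψ ∈ subFmls φ :=
        subFmls_trans φ _ hmem (by simp [subFmls, mem_subFmls_self])
      simp [ZSat, bar, NSat, (ih hψ n).1, (ih hψ n).2]
  | conj ψ χ ihψ ihχ =>
      intro hmem n
      have hψ : ψ ∈ subFmls φ :=
        subFmls_trans φ _ hmem (by simp [subFmls, mem_subFmls_self])
      have hχ : χ ∈ subFmls φ :=
        subFmls_trans φ _ hmem (by simp [subFmls, mem_subFmls_self])
      simp [ZSat, bar, NSat, (ihψ hψ n).1, (ihψ hψ n).2, (ihχ hχ n).1, (ihχ hχ n).2]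
  | nextF ψ ih =>
      intro hmem n
      have hψ : ψ ∈ subFmls φ :=
        subFmls_trans φ _ hmem (by simp [subFmls, mem_subFmls_self])
      have hc : ∀ m : ℕ, ClauseAt N m (.nextF ψ) := fun m => hcl m _ hmem
      constructor
      · show ZSat (Mdef N) ((n : ℤ) + 1) ψ ↔ N n (.Apos (.nextF ψ))
        have hcast : ((n : ℤ) + 1) = ((n + 1 : ℕ) : ℤ) := by push_cast; ring
        rw [hcast, (ih hψ (n + 1)).1]
        exact ((hc n).2).symm
      · show ZSat (Mdef N) (-(n : ℤ) + 1) ψ ↔ N n (.Aneg (.nextF ψ))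
        cases n with
        | zero =>
            have hcast : (-((0 : ℕ) : ℤ) + 1) = ((1 : ℕ) : ℤ) := by norm_num
            rw [hcast, (ih hψ 1).1]
            rw [← (hc 0).2]
            exact (hzero _ hmem trivial)
        | succ k =>
            have hcast : (-((k + 1 : ℕ) : ℤ) + 1) = -((k : ℕ) : ℤ) := by push_cast; ring
            rw [hcast, (ih hψ k).2]
            exact ((hc k).1).symm
  | nextP ψ ih =>
      intro hmem n
      have hψ : ψ ∈ subFmls φ :=
        subFmls_trans φ _ hmem (by simp [subFmls, mem_subFmls_self])
      have hc : ∀ m : ℕ, ClauseAt N m (.nextP ψ) := fun m => hcl m _ hmem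
      constructor
      · show ZSat (Mdef N) ((n : ℤ) - 1) ψ ↔ N n (.Apos (.nextP ψ))
        cases n with
        | zero =>
            have hcast : (((0 : ℕ) : ℤ) - 1) = -((1 : ℕ) : ℤ) := by norm_num
            rw [hcast, (ih hψ 1).2]
            rw [← (hc 0).2]
            exact (hzero _ hmem trivial).symm
        | succ k =>
            have hcast : (((k + 1 : ℕ) : ℤ) - 1) = ((k : ℕ) : ℤ) := by push_cast; ring
            rw [hcast, (ih hψ k).1]
            exact ((hc k).1).symm
      · show ZSat (Mdef N) (-(n : ℤ) - 1) ψ ↔ N n (.Aneg (.nextP ψ))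
        have hcast : (-(n : ℤ) - 1) = -((n + 1 : ℕ) : ℤ) := by push_cast; ring
        rw [hcast, (ih hψ (n + 1)).2]
        exact ((hc n).2).symm
  | diaF ψ ih =>
      intro hmem n
      have hψ : ψ ∈ subFmls φ :=
        subFmls_trans φ _ hmem (by simp [subFmls, mem_subFmls_self])
      have hc : ∀ m : ℕ, ClauseAt N m (.diaF ψ) := fun m => hcl m _ hmem
      constructor
      · show (∃ m : ℤ, (n : ℤ) ≤ m ∧ ZSat (Mdef N) m ψ) ↔ N n (.Apos (.diaF ψ))
        rw [z_exists_ge (fun m => ZSat (Mdef N) m ψ) n, ((hc n).2)]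
        exact exists_congr fun m => and_congr_right fun _ => (ih hψ m).1
      · show (∃ m : ℤ, -(n : ℤ) ≤ m ∧ ZSat (Mdef N) m ψ) ↔ N n (.Aneg (.diaF ψ))
        rw [split_ge_neg (fun m => ZSat (Mdef N) m ψ) n]
        rw [rec_accum (fun k => N k (.Aneg (.diaF ψ))) (fun k => NSat N k (bar false ψ))
          (fun k => (hc k).1) n]
        have h0 : N 0 (.Aneg (.diaF ψ)) ↔ ∃ m : ℕ, NSat N m (bar true ψ) := by
          rw [← hzero _ hmem trivial, (hc 0).2]
          exact exists_congr fun m => by simp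
        rw [h0]
        constructor
        · rintro (⟨m, hp⟩ | ⟨k, hk1, hkn, hp⟩)
          · exact Or.inl ⟨m, (ih hψ m).1.mp hp⟩
          · exact Or.inr ⟨k, hk1, hkn, (ih hψ k).2.mp hp⟩
        · rintro (⟨m, hp⟩ | ⟨k, hk1, hkn, hp⟩)
          · exact Or.inl ⟨m, (ih hψ m).1.mpr hp⟩
          · exact Or.inr ⟨k, hk1, hkn, (ih hψ k).2.mpr hp⟩
  | diaP ψ ih =>
      intro hmem n
      have hψ : ψ ∈ subFmls φ :=
        subFmls_trans φ _ hmem (by simp [subFmls, mem_subFmls_self])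
      have hc : ∀ m : ℕ, ClauseAt N m (.diaP ψ) := fun m => hcl m _ hmem
      constructor
      · show (∃ m : ℤ, m ≤ (n : ℤ) ∧ ZSat (Mdef N) m ψ) ↔ N n (.Apos (.diaP ψ))
        rw [split_le (fun m => ZSat (Mdef N) m ψ) n]
        rw [rec_accum (fun k => N k (.Apos (.diaP ψ))) (fun k => NSat N k (bar true ψ))
          (fun k => (hc k).1) n]
        have h0 : N 0 (.Apos (.diaP ψ)) ↔ ∃ m : ℕ, NSat N m (bar false ψ) := by
          rw [hzero _ hmem trivial, (hc 0).2]
          exact exists_congr fun m => by simp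
        rw [h0]
        constructor
        · rintro (⟨m, hp⟩ | ⟨k, hk1, hkn, hp⟩)
          · exact Or.inl ⟨m, (ih hψ m).2.mp hp⟩
          · exact Or.inr ⟨k, hk1, hkn, (ih hψ k).1.mp hp⟩
        · rintro (⟨m, hp⟩ | ⟨k, hk1, hkn, hp⟩)
          · exact Or.inl ⟨m, (ih hψ m).2.mpr hp⟩
          · exact Or.inr ⟨k, hk1, hkn, (ih hψ k).1.mpr hp⟩
      · show (∃ m : ℤ, m ≤ -(n : ℤ) ∧ ZSat (Mdef N) m ψ) ↔ N n (.Aneg (.diaP ψ))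
        rw [z_exists_le_neg (fun m => ZSat (Mdef N) m ψ) n, ((hc n).2)]
        exact exists_congr fun k => and_congr_right fun _ => (ih hψ k).2

/-- An LTL_P formula `φ` is satisfiable over ℤ (at time 0) iff its pure-future
translation `φ^ℕ` is satisfiable over ℕ (at time 0) by an ℕ-model over the alphabet Σ_φ. -/
theorem ltlp_equisat_pure_future {V : Type} (φ : LTLP V) :
    (∃ M : ℤ → V → Prop, ZSat M 0 φ) ↔ (∃ N : ℕ → Alph V → Prop, SatPF N φ) := by
  constructor
  · rintro ⟨M, hM⟩
    refine ⟨induced M, ?_, ?_, ?_, ?_⟩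
    · exact (induced_bar M φ 0).1.mpr (by simpa using hM)
    · intro p _
      simp [induced]
    · intro ξ _ _
      simp [induced]
    · intro n ξ _
      exact induced_clauses M n ξ
  · rintro ⟨N, hN⟩
    refine ⟨Mdef N, ?_⟩
    have h0 := (back_main N φ hN φ (mem_subFmls_self φ) 0).1
    simpa using h0.mpr hN.1
end

section
/- Let φ be an LTL_P formula over a set V of propositional variables. If there is a ℤ-model M with M,0 ⊨ φ, then there is an ℕ-model N over the alphabet Σ_φ with N,0 ⊨ φ^ℕ; namely, the induced ℕ-model M′ of M satisfies M′,0 ⊨ φ^ℕ. -/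

lemma bar_sat {V : Type} (M : ℤ → V → Prop) (ξ : LTLP V) :
    ∀ n : ℕ, (NSat (induced M) n (bar true ξ) ↔ ZSat M (n : ℤ) ξ) ∧
      (NSat (induced M) n (bar false ξ) ↔ ZSat M (-(n : ℤ)) ξ) := by
  induction ξ with
  | var p => intro n; simp [bar, NSat, induced, ZSat]
  | neg ψ ih => intro n; simp [bar, NSat, ZSat, ih n]
  | conj ψ χ ih1 ih2 => intro n; simp [bar, NSat, ZSat, ih1 n, ih2 n]
  | nextF ψ ih => intro n; simp [bar, NSat, induced]
  | nextP ψ ih => intro n; simp [bar, NSat, induced]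
  | diaF ψ ih => intro n; simp [bar, NSat, induced]
  | diaP ψ ih => intro n; simp [bar, NSat, induced]

lemma zsat_congr {V : Type} (M : ℤ → V → Prop) (ψ : LTLP V) {a b : ℤ} (h : a = b) :
    ZSat M a ψ ↔ ZSat M b ψ := by rw [h]

lemma clause_holds {V : Type} (M : ℤ → V → Prop) (ξ : LTLP V) (n : ℕ) :
    ClauseAt (induced M) n ξ := by
  cases ξ with
  | var p => trivial
  | neg ψ => trivial
  | conj ψ χ => trivial
  | nextF ψ =>
    constructor
    · show ZSat M (-(((n:ℕ)+1 : ℕ) : ℤ) + 1) ψ ↔ _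
      rw [(bar_sat M ψ n).2, zsat_congr M ψ (a := -(((n:ℕ)+1 : ℕ) : ℤ) + 1) (b := -(n:ℤ)) (by push_cast; ring)]
    · show ZSat M ((n:ℤ) + 1) ψ ↔ _
      rw [(bar_sat M ψ (n+1)).1, zsat_congr M ψ (a := ((n:ℤ)+1)) (b := (((n+1:ℕ)):ℤ)) (by push_cast; ring)]
  | nextP ψ =>
    constructor
    · show ZSat M ((((n:ℕ)+1 : ℕ) : ℤ) - 1) ψ ↔ _
      rw [(bar_sat M ψ n).1, zsat_congr M ψ (a := ((((n:ℕ)+1 : ℕ) : ℤ) - 1)) (b := (n:ℤ)) (by push_cast; ring)]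
    · show ZSat M (-(n:ℤ) - 1) ψ ↔ _
      rw [(bar_sat M ψ (n+1)).2, zsat_congr M ψ (a := (-(n:ℤ) - 1)) (b := (-((n+1:ℕ):ℤ))) (by push_cast; ring)]
  | diaF ψ =>
    constructor
    · show (∃ m : ℤ, -(((n:ℕ)+1:ℕ):ℤ) ≤ m ∧ ZSat M m ψ) ↔
        (∃ m : ℤ, -(n:ℤ) ≤ m ∧ ZSat M m ψ) ∨ _
      rw [(bar_sat M ψ (n+1)).2]
      push_cast
      constructor
      · rintro ⟨m, hm, hms⟩
        rcases eq_or_lt_of_le hm with h | h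
        · right; rwa [zsat_congr M ψ (a := m) (b := -((n:ℤ)+1)) h.symm] at hms
        · left; exact ⟨m, by omega, hms⟩
      · rintro (⟨m, hm, hms⟩ | h)
        · exact ⟨m, by omega, hms⟩
        · exact ⟨-((n:ℤ)+1), le_refl _, h⟩
    · show (∃ m : ℤ, (n:ℤ) ≤ m ∧ ZSat M m ψ) ↔ _
      constructor
      · rintro ⟨m, hm, hms⟩
        refine ⟨m.toNat, by omega, ?_⟩
        rw [(bar_sat M ψ m.toNat).1, zsat_congr M ψ (a := (m.toNat:ℤ)) (b := m) (by omega)]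
        exact hms
      · rintro ⟨m, hm, hms⟩
        rw [(bar_sat M ψ m).1] at hms
        exact ⟨m, by exact_mod_cast hm, hms⟩
  | diaP ψ =>
    constructor
    · show (∃ m : ℤ, m ≤ (((n:ℕ)+1:ℕ):ℤ) ∧ ZSat M m ψ) ↔
        (∃ m : ℤ, m ≤ (n:ℤ) ∧ ZSat M m ψ) ∨ _
      rw [(bar_sat M ψ (n+1)).1]
      push_cast
      constructor
      · rintro ⟨m, hm, hms⟩
        rcases eq_or_lt_of_le hm with h | h
        · right; rw [h] at hms; exact hms
        · left; exact ⟨m, by omega, hms⟩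
      · rintro (⟨m, hm, hms⟩ | h)
        · exact ⟨m, by omega, hms⟩
        · exact ⟨(n:ℤ)+1, le_refl _, h⟩
    · show (∃ m : ℤ, m ≤ -(n:ℤ) ∧ ZSat M m ψ) ↔ _
      constructor
      · rintro ⟨m, hm, hms⟩
        refine ⟨(-m).toNat, by omega, ?_⟩
        rw [(bar_sat M ψ (-m).toNat).2, zsat_congr M ψ (a := -(((-m).toNat):ℤ)) (b := m) (by omega)]
        exact hms
      · rintro ⟨m, hm, hms⟩
        rw [(bar_sat M ψ m).2] at hms
        exact ⟨-(m:ℤ), by omega, hms⟩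

/-- If `M,0 ⊨ φ` for a ℤ-model `M`, then there is an ℕ-model over Σ_φ
satisfying `φ^ℕ` at 0; namely the induced ℕ-model `M′` of `M` satisfies `M′,0 ⊨ φ^ℕ`. -/
theorem induced_model_sat_pure_future {V : Type} (φ : LTLP V) (M : ℤ → V → Prop)
    (h : ZSat M 0 φ) :
    SatPF (induced M) φ ∧ ∃ N : ℕ → Alph V → Prop, SatPF N φ := by
  have main : SatPF (induced M) φ := by
    refine ⟨?_, ?_, ?_, ?_⟩
    · rw [(bar_sat M φ 0).1]; exact_mod_cast h
    · intro p _; simp [induced]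
    · intro ξ _ _; cases ξ <;> simp [induced]
    · intro n ξ _; exact clause_holds M ξ n
  exact ⟨main, induced M, main⟩
end

section
/- Let φ be an LTL_P formula over a set V of propositional variables. If there is an ℕ-model N over the alphabet Σ_φ with N,0 ⊨ φ^ℕ, then there is a ℤ-model M with M,0 ⊨ φ. -/
/-! The positive copy `ξ̄₊` of a formula is read off the nonnegative half of a ℤ-model and
the negative copy `ξ̄₋` off the mirrored nonpositive half. The clauses (iii) of `φ^ℕ` are
exactly the semantic recurrences of the temporal operators read in these two directions, and
the conditions (ii) glue the two halves together at time `0`. So the ℤ-model whose halves are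
given by the variables `p₊` and `p₋` of `N` satisfies every subformula `ξ` at `±n` exactly when
`N` satisfies `ξ̄₊`, resp. `ξ̄₋`, at `n`. -/

theorem Int.exists_natCast_le_and_iff {P : ℤ → Prop} {n : ℕ} :
    (∃ m : ℤ, n ≤ m ∧ P m) ↔ ∃ m : ℕ, n ≤ m ∧ P m := by
  constructor
  · rintro ⟨m, hnm, hm⟩
    lift m to ℕ using (Int.natCast_nonneg n).trans hnm
    exact ⟨m, by exact_mod_cast hnm, hm⟩
  · rintro ⟨m, hnm, hm⟩
    exact ⟨m, by exact_mod_cast hnm, hm⟩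

theorem Int.exists_le_neg_natCast_and_iff {P : ℤ → Prop} {n : ℕ} :
    (∃ m : ℤ, m ≤ -n ∧ P m) ↔ ∃ m : ℕ, n ≤ m ∧ P (-m) := by
  constructor
  · rintro ⟨m, hm, hP⟩
    exact ⟨(-m).toNat, by omega, by rwa [Int.toNat_of_nonneg (by omega), neg_neg]⟩
  · rintro ⟨m, hm, hP⟩
    exact ⟨-m, by omega, hP⟩

theorem Int.exists_sub_one_le_and_iff {P : ℤ → Prop} {z : ℤ} :
    (∃ m, z - 1 ≤ m ∧ P m) ↔ (∃ m, z ≤ m ∧ P m) ∨ P (z - 1) := by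
  constructor
  · rintro ⟨m, hm, hP⟩
    rcases hm.eq_or_lt with rfl | hlt
    · exact .inr hP
    · exact .inl ⟨m, by omega, hP⟩
  · rintro (⟨m, hm, hP⟩ | hP)
    · exact ⟨m, by omega, hP⟩
    · exact ⟨z - 1, le_rfl, hP⟩

theorem Int.exists_le_add_one_and_iff {P : ℤ → Prop} {z : ℤ} :
    (∃ m, m ≤ z + 1 ∧ P m) ↔ (∃ m, m ≤ z ∧ P m) ∨ P (z + 1) := by
  constructor
  · rintro ⟨m, hm, hP⟩
    rcases hm.eq_or_lt with rfl | hlt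
    · exact .inr hP
    · exact .inl ⟨m, by omega, hP⟩
  · rintro (⟨m, hm, hP⟩ | hP)
    · exact ⟨m, by omega, hP⟩
    · exact ⟨z + 1, le_rfl, hP⟩

theorem Nat.iff_of_or_recurrence {a b c : ℕ → Prop} (h₀ : a 0 ↔ b 0)
    (ha : ∀ k, a (k + 1) ↔ a k ∨ c k) (hb : ∀ k, b (k + 1) ↔ b k ∨ c k) :
    ∀ n, a n ↔ b n
  | 0 => h₀
  | k + 1 => by rw [ha, hb, Nat.iff_of_or_recurrence h₀ ha hb k]

section Agreement

variable {V : Type} {M : ℤ → V → Prop} {N : ℕ → Alph V → Prop} {ψ χ : LTLP V}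

def AgreesOn (M : ℤ → V → Prop) (N : ℕ → Alph V → Prop) (ξ : LTLP V) : Prop :=
  (∀ n : ℕ, ZSat M n ξ ↔ NSat N n (bar true ξ)) ∧
  (∀ n : ℕ, ZSat M (-n) ξ ↔ NSat N n (bar false ξ))

theorem AgreesOn.neg (hψ : AgreesOn M N ψ) : AgreesOn M N (.neg ψ) :=
  ⟨fun n => not_congr (hψ.1 n), fun n => not_congr (hψ.2 n)⟩

theorem AgreesOn.conj (hψ : AgreesOn M N ψ) (hχ : AgreesOn M N χ) :
    AgreesOn M N (.conj ψ χ) :=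
  ⟨fun n => and_congr (hψ.1 n) (hχ.1 n), fun n => and_congr (hψ.2 n) (hχ.2 n)⟩

theorem AgreesOn.nextF (hψ : AgreesOn M N ψ) (hc : ∀ n, ClauseAt N n (.nextF ψ))
    (h₀ : N 0 (.Apos (.nextF ψ)) ↔ N 0 (.Aneg (.nextF ψ))) : AgreesOn M N (.nextF ψ) := by
  have hpos (n : ℕ) : ZSat M ((n : ℤ) + 1) ψ ↔ N n (.Apos (.nextF ψ)) := by
    rw [← Nat.cast_succ, hψ.1, (hc n).2]
  refine ⟨hpos, fun n => ?_⟩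
  change ZSat M (-(n : ℤ) + 1) ψ ↔ N n (.Aneg (.nextF ψ))
  cases n with
  | zero => simpa using (hpos 0).trans h₀
  | succ k => rw [show -((k + 1 : ℕ) : ℤ) + 1 = -k by push_cast; ring, hψ.2, (hc k).1]

theorem AgreesOn.nextP (hψ : AgreesOn M N ψ) (hc : ∀ n, ClauseAt N n (.nextP ψ))
    (h₀ : N 0 (.Apos (.nextP ψ)) ↔ N 0 (.Aneg (.nextP ψ))) : AgreesOn M N (.nextP ψ) := by
  have hneg (n : ℕ) : ZSat M (-(n : ℤ) - 1) ψ ↔ N n (.Aneg (.nextP ψ)) := by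
    rw [← neg_add', ← Nat.cast_succ, hψ.2, (hc n).2]
  refine ⟨fun n => ?_, hneg⟩
  change ZSat M ((n : ℤ) - 1) ψ ↔ N n (.Apos (.nextP ψ))
  cases n with
  | zero => simpa using (hneg 0).trans h₀.symm
  | succ k => rw [Nat.cast_succ, add_sub_cancel_right, hψ.1, (hc k).1]

theorem AgreesOn.diaF (hψ : AgreesOn M N ψ) (hc : ∀ n, ClauseAt N n (.diaF ψ))
    (h₀ : N 0 (.Apos (.diaF ψ)) ↔ N 0 (.Aneg (.diaF ψ))) : AgreesOn M N (.diaF ψ) := by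
  have hpos (n : ℕ) : ZSat M n (.diaF ψ) ↔ N n (.Apos (.diaF ψ)) := by
    simp only [ZSat, Int.exists_natCast_le_and_iff, hψ.1, (hc n).2]
  have h₀' : ZSat M (-(0 : ℕ)) (.diaF ψ) ↔ N 0 (.Aneg (.diaF ψ)) := by
    simpa using (hpos 0).trans h₀
  refine ⟨hpos, Nat.iff_of_or_recurrence h₀' (fun k => ?_) (fun k => (hc k).1)⟩
  change (∃ m, -((k + 1 : ℕ) : ℤ) ≤ m ∧ _) ↔ _
  rw [Nat.cast_succ, neg_add', Int.exists_sub_one_le_and_iff, ← neg_add', ← Nat.cast_succ,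
    hψ.2]
  rfl

theorem AgreesOn.diaP (hψ : AgreesOn M N ψ) (hc : ∀ n, ClauseAt N n (.diaP ψ))
    (h₀ : N 0 (.Apos (.diaP ψ)) ↔ N 0 (.Aneg (.diaP ψ))) : AgreesOn M N (.diaP ψ) := by
  have hneg (n : ℕ) : ZSat M (-n) (.diaP ψ) ↔ N n (.Aneg (.diaP ψ)) := by
    simp only [ZSat, Int.exists_le_neg_natCast_and_iff, hψ.2, (hc n).2]
  have h₀' : ZSat M (0 : ℕ) (.diaP ψ) ↔ N 0 (.Apos (.diaP ψ)) := by
    simpa using (hneg 0).trans h₀.symm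
  refine ⟨Nat.iff_of_or_recurrence h₀' (fun k => ?_) (fun k => (hc k).1), hneg⟩
  change (∃ m, m ≤ ((k + 1 : ℕ) : ℤ) ∧ _) ↔ _
  rw [Nat.cast_succ, Int.exists_le_add_one_and_iff, ← Nat.cast_succ, hψ.1]
  rfl

end Agreement

def toZModel {V : Type} (N : ℕ → Alph V → Prop) : ℤ → V → Prop
  | .ofNat n, p => N n (.pos p)
  | .negSucc n, p => N (n + 1) (.negv p)

theorem agreesOn_var_toZModel {V : Type} {N : ℕ → Alph V → Prop} {p : V}
    (h₀ : N 0 (.pos p) ↔ N 0 (.negv p)) : AgreesOn (toZModel N) N (.var p) := by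
  refine ⟨fun n => Iff.rfl, fun n => ?_⟩
  cases n with
  | zero => exact h₀
  | succ k => exact Iff.rfl

theorem agreesOn_toZModel {V : Type} {φ : LTLP V} {N : ℕ → Alph V → Prop} (h : SatPF N φ) :
    ∀ ξ, subFmls ξ ⊆ subFmls φ → AgreesOn (toZModel N) N ξ := by
  obtain ⟨-, hvar, htemp, hclause⟩ := h
  intro ξ hsub
  induction ξ with
  | var p => exact agreesOn_var_toZModel (hvar p (hsub rfl))
  | neg ψ ih => exact (ih ((Set.subset_insert _ _).trans hsub)).neg
  | conj ψ χ ihψ ihχ =>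
    obtain ⟨hψ, hχ⟩ := Set.union_subset_iff.1 ((Set.subset_insert _ _).trans hsub)
    exact (ihψ hψ).conj (ihχ hχ)
  | nextF ψ ih =>
    have hself := hsub (Set.mem_insert _ _)
    exact (ih ((Set.subset_insert _ _).trans hsub)).nextF (hclause · _ hself)
      (htemp _ hself trivial)
  | nextP ψ ih =>
    have hself := hsub (Set.mem_insert _ _)
    exact (ih ((Set.subset_insert _ _).trans hsub)).nextP (hclause · _ hself)
      (htemp _ hself trivial)
  | diaF ψ ih =>
    have hself := hsub (Set.mem_insert _ _)
    exact (ih ((Set.subset_insert _ _).trans hsub)).diaF (hclause · _ hself)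
      (htemp _ hself trivial)
  | diaP ψ ih =>
    have hself := hsub (Set.mem_insert _ _)
    exact (ih ((Set.subset_insert _ _).trans hsub)).diaP (hclause · _ hself)
      (htemp _ hself trivial)

/-- If some ℕ-model `N` over Σ_φ satisfies `N,0 ⊨ φ^ℕ`, then there is a
ℤ-model `M` with `M,0 ⊨ φ`. -/
theorem pure_future_sat_to_zmodel {V : Type} (φ : LTLP V) (N : ℕ → Alph V → Prop)
    (h : SatPF N φ) :
    ∃ M : ℤ → V → Prop, ZSat M 0 φ :=
  ⟨toZModel N, ((agreesOn_toZModel h φ subset_rfl).1 0).2 h.1⟩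
end

section
/- Let φ be an LTL_P formula, M a ℤ-model, and M′ the induced ℕ-model of M over Σ_φ. Then for every subformula ψ ∈ sub(φ) and every n ∈ ℕ: (1) M,n ⊨ ψ if and only if M′,n ⊨ ψ̄₊, and (2) M,−n ⊨ ψ if and only if M′,n ⊨ ψ̄₋. -/
/-- For every subformula `ψ` of `φ` and every `n ∈ ℕ`:
(1) `M,n ⊨ ψ` iff `M′,n ⊨ ψ̄₊`, and (2) `M,−n ⊨ ψ` iff `M′,n ⊨ ψ̄₋`,
where `M′` is the induced ℕ-model of the ℤ-model `M`. -/
theorem induced_model_truth_lemma {V : Type} (φ : LTLP V) (M : ℤ → V → Prop) :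
    ∀ ψ ∈ subFmls φ, ∀ n : ℕ,
      (ZSat M (n : ℤ) ψ ↔ NSat (induced M) n (bar true ψ)) ∧
      (ZSat M (-(n : ℤ)) ψ ↔ NSat (induced M) n (bar false ψ)) := by
  intro ψ hm n
  clear hm
  induction ψ with
  | var p => exact ⟨Iff.rfl, Iff.rfl⟩
  | neg ψ ih => exact ⟨not_congr ih.1, not_congr ih.2⟩
  | conj ψ χ ih1 ih2 => exact ⟨and_congr ih1.1 ih2.1, and_congr ih1.2 ih2.2⟩
  | nextF ψ _ => exact ⟨Iff.rfl, Iff.rfl⟩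
  | nextP ψ _ => exact ⟨Iff.rfl, Iff.rfl⟩
  | diaF ψ _ => exact ⟨Iff.rfl, Iff.rfl⟩
  | diaP ψ _ => exact ⟨Iff.rfl, Iff.rfl⟩
end

section
/- Let φ be an LTL_P formula, M a ℤ-model, M′ the induced ℕ-model of M over Σ_φ, and let ◯_P ψ be a temporal subformula of φ. Then for every n ∈ ℕ: (1) M′,(n+1) ⊨ A₊^{◯_Pψ} if and only if M′,n ⊨ ψ̄₊, and (2) M′,n ⊨ A₋^{◯_Pψ} if and only if M′,(n+1) ⊨ ψ̄₋. -/
lemma bar_sat_pos {V : Type} (M : ℤ → V → Prop) :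
    ∀ (ψ : LTLP V) (n : ℕ), NSat (induced M) n (bar true ψ) ↔ ZSat M (n : ℤ) ψ := by
  intro ψ
  induction ψ with
  | var p => intro n; simp [bar, NSat, induced, ZSat]
  | neg ψ ih => intro n; simp [bar, NSat, ZSat, ih]
  | conj ψ χ ih1 ih2 => intro n; simp [bar, NSat, ZSat, ih1, ih2]
  | nextF ψ _ => intro n; simp [bar, NSat, induced]
  | nextP ψ _ => intro n; simp [bar, NSat, induced]
  | diaF ψ _ => intro n; simp [bar, NSat, induced]
  | diaP ψ _ => intro n; simp [bar, NSat, induced]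

lemma bar_sat_neg {V : Type} (M : ℤ → V → Prop) :
    ∀ (ψ : LTLP V) (n : ℕ), NSat (induced M) n (bar false ψ) ↔ ZSat M (-(n : ℤ)) ψ := by
  intro ψ
  induction ψ with
  | var p => intro n; simp [bar, NSat, induced, ZSat]
  | neg ψ ih => intro n; simp [bar, NSat, ZSat, ih]
  | conj ψ χ ih1 ih2 => intro n; simp [bar, NSat, ZSat, ih1, ih2]
  | nextF ψ _ => intro n; simp [bar, NSat, induced]
  | nextP ψ _ => intro n; simp [bar, NSat, induced]
  | diaF ψ _ => intro n; simp [bar, NSat, induced]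
  | diaP ψ _ => intro n; simp [bar, NSat, induced]

/-- For a temporal subformula `◯_P ψ` of `φ` and the induced ℕ-model `M′`
of a ℤ-model `M`, for every `n ∈ ℕ`:
(1) `M′,n+1 ⊨ A₊^{◯_Pψ}` iff `M′,n ⊨ ψ̄₊`, and
(2) `M′,n ⊨ A₋^{◯_Pψ}` iff `M′,n+1 ⊨ ψ̄₋`. -/
theorem induced_model_nextP_clauses {V : Type} (φ : LTLP V) (M : ℤ → V → Prop)
    (ψ : LTLP V) (h : LTLP.nextP ψ ∈ subFmls φ) :
    ∀ n : ℕ,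
      (induced M (n + 1) (.Apos (.nextP ψ)) ↔ NSat (induced M) n (bar true ψ)) ∧
      (induced M n (.Aneg (.nextP ψ)) ↔ NSat (induced M) (n + 1) (bar false ψ)) := by
  intro n
  constructor
  · show ZSat M _ _ ↔ _
    rw [bar_sat_pos]
    show ZSat M _ ψ ↔ _
    push_cast
    ring_nf
  · show ZSat M _ _ ↔ _
    rw [bar_sat_neg]
    show ZSat M _ ψ ↔ _
    push_cast
    ring_nf
end

section
/- Let φ be an LTL_P formula, α a formula with ◇_F α ∈ sub(φ), and M′ an ℕ-model over Σ_φ satisfying, for all ℓ ∈ ℕ: (a) M′,(ℓ+1) ⊨ A₋^{◇_Fα} iff (M′,ℓ ⊨ A₋^{◇_Fα} or M′,(ℓ+1) ⊨ ᾱ₋), and (b) M′,ℓ ⊨ A₊^{◇_Fα} iff there exists m ≥ ℓ with M′,m ⊨ ᾱ₊; and satisfying at time 0: M′,0 ⊨ A₊^{◇_Fα} iff M′,0 ⊨ A₋^{◇_Fα}, and M′,0 ⊨ ᾱ₊ iff M′,0 ⊨ ᾱ₋. Let M be a ℤ-model such that for all m ∈ ℤ: M,m ⊨ α iff (M′,m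 ⊨ ᾱ₊ when m ≥ 0, and M′,−m ⊨ ᾱ₋ when m < 0). Then for all n ∈ ℤ: M,n ⊨ ◇_F α iff (M′,n ⊨ A₊^{◇_Fα} when n ≥ 0, and M′,−n ⊨ A₋^{◇_Fα} when n < 0). -/
/-! Unfolding clause (a) shows that `A₋` holds at `k` iff it holds at `0` or `ᾱ₋` holds somewhere
in `(0, k]`; at time `0`, `A₋` agrees with `A₊`, which by (b) records `ᾱ₊` somewhere in `ℕ`. So a
witness `m ≥ n` for `α` in `M` is either nonnegative, read through `ᾱ₊`, or negative, read
through `ᾱ₋`. -/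

theorem Nat.iff_or_exists_of_iff_succ_or {A P : ℕ → Prop} (h : ∀ l, A (l + 1) ↔ A l ∨ P (l + 1))
    (k : ℕ) : A k ↔ A 0 ∨ ∃ j, 0 < j ∧ j ≤ k ∧ P j := by
  induction k with
  | zero => simp
  | succ k ih =>
    rw [h, ih]
    constructor
    · rintro ((h0 | ⟨j, hj0, hjk, hPj⟩) | hP)
      · exact .inl h0
      · exact .inr ⟨j, hj0, hjk.trans k.le_succ, hPj⟩
      · exact .inr ⟨k + 1, k.succ_pos, le_rfl, hP⟩
    · rintro (h0 | ⟨j, hj0, hjk, hPj⟩)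
      · exact .inl (.inl h0)
      · rcases hjk.lt_or_eq with hjk | rfl
        · exact .inl (.inr ⟨j, hj0, Nat.lt_succ_iff.mp hjk, hPj⟩)
        · exact .inr hPj

theorem Int.exists_ge_iff_exists_natCast {Q : ℤ → Prop} {n : ℤ} (hn : 0 ≤ n) :
    (∃ m, n ≤ m ∧ Q m) ↔ ∃ k : ℕ, n.toNat ≤ k ∧ Q k :=
  ⟨fun ⟨m, hnm, hQ⟩ => ⟨m.toNat, by omega, by rwa [Int.toNat_of_nonneg (hn.trans hnm)]⟩,
    fun ⟨k, hnk, hQ⟩ => ⟨k, by omega, hQ⟩⟩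

theorem Int.exists_ge_iff_of_neg {Q : ℤ → Prop} {n : ℤ} (hn : n < 0) :
    (∃ m, n ≤ m ∧ Q m) ↔ (∃ k : ℕ, Q k) ∨ ∃ j : ℕ, 0 < j ∧ j ≤ (-n).toNat ∧ Q (-j) := by
  constructor
  · rintro ⟨m, hnm, hQ⟩
    rcases le_or_gt 0 m with hm | hm
    · exact .inl ⟨m.toNat, by rwa [Int.toNat_of_nonneg hm]⟩
    · exact .inr ⟨(-m).toNat, by omega, by omega, by rwa [Int.toNat_of_nonneg (by omega), neg_neg]⟩
  · rintro (⟨k, hQ⟩ | ⟨j, -, hjn, hQ⟩)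
    · exact ⟨k, by omega, hQ⟩
    · exact ⟨-j, by omega, hQ⟩

theorem diaF_backward_general {V : Type} (α : LTLP V)
    (N : ℕ → Alph V → Prop) (M : ℤ → V → Prop)
    (ha : ∀ l : ℕ, N (l + 1) (.Aneg (.diaF α)) ↔
      (N l (.Aneg (.diaF α)) ∨ NSat N (l + 1) (bar false α)))
    (hb : ∀ l : ℕ, N l (.Apos (.diaF α)) ↔ ∃ m, l ≤ m ∧ NSat N m (bar true α))
    (h0A : N 0 (.Apos (.diaF α)) ↔ N 0 (.Aneg (.diaF α)))
    (hM : ∀ m : ℤ, ZSat M m α ↔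
      if 0 ≤ m then NSat N m.toNat (bar true α) else NSat N (-m).toNat (bar false α)) :
    ∀ n : ℤ, ZSat M n (.diaF α) ↔
      if 0 ≤ n then N n.toNat (.Apos (.diaF α)) else N (-n).toNat (.Aneg (.diaF α)) := by
  have hM_pos (k : ℕ) : ZSat M k α ↔ NSat N k (bar true α) := by simp [hM]
  have hM_neg (j : ℕ) (hj : 0 < j) : ZSat M (-j) α ↔ NSat N j (bar false α) := by
    rw [hM, if_neg (by omega)]; simp
  intro n
  simp only [ZSat]
  split_ifs with hn
  · rw [Int.exists_ge_iff_exists_natCast hn, hb]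
    simp only [hM_pos]
  · have hAneg := Nat.iff_or_exists_of_iff_succ_or (A := fun k => N k (.Aneg (.diaF α)))
      (P := fun k => NSat N k (bar false α)) ha
    rw [Int.exists_ge_iff_of_neg (not_le.mp hn), hAneg, ← h0A, hb]
    simp only [hM_pos, zero_le, true_and]
    exact or_congr_right (exists_congr fun j => and_congr_right fun hj => and_congr_right
      fun _ => hM_neg j hj)

/-- correctness of the clauses for `◇_F α` in the backward direction. -/
theorem diaF_backward {V : Type} (φ α : LTLP V) (hsub : LTLP.diaF α ∈ subFmls φ)
    (N : ℕ → Alph V → Prop) (M : ℤ → V → Prop)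
    (ha : ∀ l : ℕ, N (l + 1) (.Aneg (.diaF α)) ↔
      (N l (.Aneg (.diaF α)) ∨ NSat N (l + 1) (bar false α)))
    (hb : ∀ l : ℕ, N l (.Apos (.diaF α)) ↔ ∃ m, l ≤ m ∧ NSat N m (bar true α))
    (h0A : N 0 (.Apos (.diaF α)) ↔ N 0 (.Aneg (.diaF α)))
    (h0a : NSat N 0 (bar true α) ↔ NSat N 0 (bar false α))
    (hM : ∀ m : ℤ, ZSat M m α ↔
      if 0 ≤ m then NSat N m.toNat (bar true α) else NSat N (-m).toNat (bar false α)) :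
    ∀ n : ℤ, ZSat M n (.diaF α) ↔
      if 0 ≤ n then N n.toNat (.Apos (.diaF α)) else N (-n).toNat (.Aneg (.diaF α)) :=
  diaF_backward_general α N M ha hb h0A hM
end

section
/- Let φ be an LTL_P formula, α a formula with ◇_P α ∈ sub(φ), and M′ an ℕ-model over Σ_φ satisfying, for all ℓ ∈ ℕ: (a) M′,(ℓ+1) ⊨ A₊^{◇_Pα} iff (M′,ℓ ⊨ A₊^{◇_Pα} or M′,(ℓ+1) ⊨ ᾱ₊), and (b) M′,ℓ ⊨ A₋^{◇_Pα} iff there exists m ≥ ℓ with M′,m ⊨ ᾱ₋; and satisfying at time 0: M′,0 ⊨ A₊^{◇_Pα} iff M′,0 ⊨ A₋^{◇_Pα}, and M′,0 ⊨ ᾱ₊ iff M′,0 ⊨ ᾱ₋. Let M be a ℤ-model such that for all m ∈ ℤ: M,m ⊨ α iff (M′,m ⊨ ᾱ₊ when m ≥ 0, and M′,−m ⊨ ᾱ₋ when m < 0). Then for all n ∈ ℤ: M,n ⊨ ◇_P α iff (M′,n ⊨ A₊^{◇_Pα} when n ≥ 0, and M′,−n ⊨ A₋^{◇_Pα} when n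 < 0). -/
/-- correctness of the clauses for `◇_P α` in the backward direction. -/
theorem diaP_backward {V : Type} (φ α : LTLP V) (hsub : LTLP.diaP α ∈ subFmls φ)
    (N : ℕ → Alph V → Prop) (M : ℤ → V → Prop)
    (ha : ∀ l : ℕ, N (l + 1) (.Apos (.diaP α)) ↔
      (N l (.Apos (.diaP α)) ∨ NSat N (l + 1) (bar true α)))
    (hb : ∀ l : ℕ, N l (.Aneg (.diaP α)) ↔ ∃ m, l ≤ m ∧ NSat N m (bar false α))
    (h0A : N 0 (.Apos (.diaP α)) ↔ N 0 (.Aneg (.diaP α)))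
    (h0a : NSat N 0 (bar true α) ↔ NSat N 0 (bar false α))
    (hM : ∀ m : ℤ, ZSat M m α ↔
      if 0 ≤ m then NSat N m.toNat (bar true α) else NSat N (-m).toNat (bar false α)) :
    ∀ n : ℤ, ZSat M n (.diaP α) ↔
      if 0 ≤ n then N n.toNat (.Apos (.diaP α)) else N (-n).toNat (.Aneg (.diaP α)) := by
  -- key: characterization of Apos at each k
  have key : ∀ k : ℕ, N k (.Apos (.diaP α)) ↔
      (N 0 (.Apos (.diaP α)) ∨ ∃ j, 1 ≤ j ∧ j ≤ k ∧ NSat N j (bar true α)) := by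
    intro k
    induction k with
    | zero =>
      constructor
      · intro h; exact Or.inl h
      · rintro (h | ⟨j, hj1, hj2, _⟩); · exact h
        · omega
    | succ k ih =>
      rw [ha k, ih]
      constructor
      · rintro ((h | ⟨j, hj1, hj2, hjT⟩) | hT)
        · exact Or.inl h
        · exact Or.inr ⟨j, hj1, by omega, hjT⟩
        · exact Or.inr ⟨k + 1, by omega, le_refl _, hT⟩
      · rintro (h | ⟨j, hj1, hj2, hjT⟩)
        · exact Or.inl (Or.inl h)
        · rcases Nat.lt_or_ge j (k + 1) with hlt | hge
          · exact Or.inl (Or.inr ⟨j, hj1, by omega, hjT⟩)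
          · have : j = k + 1 := by omega
            subst this; exact Or.inr hjT
  -- any false-witness gives Apos 0
  have fw : ∀ m : ℕ, NSat N m (bar false α) → N 0 (.Apos (.diaP α)) := by
    intro m hm
    exact h0A.mpr ((hb 0).mpr ⟨m, Nat.zero_le m, hm⟩)
  intro n
  show (∃ m, m ≤ n ∧ ZSat M m α) ↔ _
  split_ifs with hn
  · -- n ≥ 0
    rw [key]
    constructor
    · rintro ⟨m, hmn, hz⟩
      rw [hM m] at hz
      split_ifs at hz with hm
      · rcases Nat.eq_zero_or_pos m.toNat with h0 | hpos
        · rw [h0] at hz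
          exact Or.inl (fw 0 (h0a.mp hz))
        · exact Or.inr ⟨m.toNat, hpos, by omega, hz⟩
      · exact Or.inl (fw (-m).toNat hz)
    · rintro (h | ⟨j, hj1, hj2, hjT⟩)
      · -- Apos 0 ⇒ Aneg 0 ⇒ some false witness ⇒ witness at a nonpositive time
        obtain ⟨m, _, hm⟩ := (hb 0).mp (h0A.mp h)
        refine ⟨-(m : ℤ), by omega, ?_⟩
        rw [hM]
        rcases Nat.eq_zero_or_pos m with h0 | hpos
        · subst h0; simpa using h0a.mpr hm
        · have : ¬ (0 ≤ -(m : ℤ)) := by omega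
          rw [if_neg this]
          simpa using hm
      · refine ⟨(j : ℤ), by omega, ?_⟩
        rw [hM, if_pos (by omega)]
        simpa using hjT
  · -- n < 0
    rw [hb]
    constructor
    · rintro ⟨m, hmn, hz⟩
      rw [hM m] at hz
      rw [if_neg (by omega)] at hz
      exact ⟨(-m).toNat, by omega, hz⟩
    · rintro ⟨m, hmn, hm⟩
      refine ⟨-(m : ℤ), by omega, ?_⟩
      rw [hM, if_neg (by omega)]
      simpa using hm
end

section
/- Let φ be an LTL_P formula, α a formula with ◯_F α ∈ sub(φ), and M′ an ℕ-model over Σ_φ satisfying, for all ℓ ∈ ℕ: (a) M′,(ℓ+1) ⊨ A₋^{◯_Fα} iff M′,ℓ ⊨ ᾱ₋, and (b) M′,ℓ ⊨ A₊^{◯_Fα} iff M′,(ℓ+1) ⊨ ᾱ₊; and satisfying at time 0: M′,0 ⊨ A₊^{◯_Fα} iff M′,0 ⊨ A₋^{◯_Fα}, and M′,0 ⊨ ᾱ₊ iff M′,0 ⊨ ᾱ₋. Let M be a ℤ-model such that for all m ∈ ℤ: M,m ⊨ α iff (M′,m ⊨ ᾱ₊ when m ≥ 0, and M′,−m ⊨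 ᾱ₋ when m < 0). Then for all n ∈ ℤ: M,n ⊨ ◯_F α iff (M′,n ⊨ A₊^{◯_Fα} when n ≥ 0, and M′,−n ⊨ A₋^{◯_Fα} when n < 0). -/
/-- correctness of the clauses for `◯_F α` in the backward direction. -/
theorem nextF_backward {V : Type} (φ α : LTLP V) (hsub : LTLP.nextF α ∈ subFmls φ)
    (N : ℕ → Alph V → Prop) (M : ℤ → V → Prop)
    (ha : ∀ l : ℕ, N (l + 1) (.Aneg (.nextF α)) ↔ NSat N l (bar false α))
    (hb : ∀ l : ℕ, N l (.Apos (.nextF α)) ↔ NSat N (l + 1) (bar true α))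
    (h0A : N 0 (.Apos (.nextF α)) ↔ N 0 (.Aneg (.nextF α)))
    (h0a : NSat N 0 (bar true α) ↔ NSat N 0 (bar false α))
    (hM : ∀ m : ℤ, ZSat M m α ↔
      if 0 ≤ m then NSat N m.toNat (bar true α) else NSat N (-m).toNat (bar false α)) :
    ∀ n : ℤ, ZSat M n (.nextF α) ↔
      if 0 ≤ n then N n.toNat (.Apos (.nextF α)) else N (-n).toNat (.Aneg (.nextF α)) := by
  intro n
  show ZSat M (n + 1) α ↔ _
  rw [hM (n + 1)]
  rcases le_or_gt 0 n with h | h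
  · have h1 : (0:ℤ) ≤ n + 1 := by omega
    rw [if_pos h1, if_pos h]
    have : (n + 1).toNat = n.toNat + 1 := by omega
    rw [this, hb n.toNat]
  · rcases eq_or_lt_of_le (by omega : n + 1 ≤ 0) with h1 | h1
    · have hn : n = -1 := by omega
      subst hn
      norm_num
      rw [h0a, ← ha 0]
    · rw [if_neg (by omega), if_neg (by omega)]
      have : (-n).toNat = (-(n+1)).toNat + 1 := by omega
      rw [this, ha]
end

section
/- Let φ be an LTL_P formula, α a formula with ◯_P α ∈ sub(φ), and M′ an ℕ-model over Σ_φ satisfying, for all ℓ ∈ ℕ: (a) M′,(ℓ+1) ⊨ A₊^{◯_Pα} iff M′,ℓ ⊨ ᾱ₊, and (b) M′,ℓ ⊨ A₋^{◯_Pα} iff M′,(ℓ+1) ⊨ ᾱ₋; and satisfying at time 0: M′,0 ⊨ A₊^{◯_Pα} iff M′,0 ⊨ A₋^{◯_Pα}, and M′,0 ⊨ ᾱ₊ iff M′,0 ⊨ ᾱ₋. Let M be a ℤ-model such that for all m ∈ ℤ: M,m ⊨ α iff (M′,m ⊨ ᾱ₊ when m ≥ 0, and M′,−m ⊨ ᾱ₋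 when m < 0). Then for all n ∈ ℤ: M,n ⊨ ◯_P α iff (M′,n ⊨ A₊^{◯_Pα} when n ≥ 0, and M′,−n ⊨ A₋^{◯_Pα} when n < 0). -/
/-- correctness of the clauses for `◯_P α` in the backward direction. -/
theorem nextP_backward {V : Type} (φ α : LTLP V) (hsub : LTLP.nextP α ∈ subFmls φ)
    (N : ℕ → Alph V → Prop) (M : ℤ → V → Prop)
    (ha : ∀ l : ℕ, N (l + 1) (.Apos (.nextP α)) ↔ NSat N l (bar true α))
    (hb : ∀ l : ℕ, N l (.Aneg (.nextP α)) ↔ NSat N (l + 1) (bar false α))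
    (h0A : N 0 (.Apos (.nextP α)) ↔ N 0 (.Aneg (.nextP α)))
    (h0a : NSat N 0 (bar true α) ↔ NSat N 0 (bar false α))
    (hM : ∀ m : ℤ, ZSat M m α ↔
      if 0 ≤ m then NSat N m.toNat (bar true α) else NSat N (-m).toNat (bar false α)) :
    ∀ n : ℤ, ZSat M n (.nextP α) ↔
      if 0 ≤ n then N n.toNat (.Apos (.nextP α)) else N (-n).toNat (.Aneg (.nextP α)) := by
  intro n
  show ZSat M (n - 1) α ↔ _
  rcases lt_trichotomy n 0 with hn | hn | hn
  · rw [if_neg (not_le.mpr hn), hM]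
    rw [if_neg (by omega : ¬ (0:ℤ) ≤ n - 1)]
    have h1 : (-(n-1)).toNat = (-n).toNat + 1 := by omega
    rw [h1, ← hb]
  · subst hn
    rw [if_pos le_rfl, hM]
    rw [if_neg (by omega : ¬ (0:ℤ) ≤ (0:ℤ) - 1)]
    have h1 : (-((0:ℤ)-1)).toNat = 1 := by omega
    rw [h1]
    show _ ↔ N (Int.toNat 0) _
    rw [Int.toNat_zero, h0A, hb 0]
  · rw [if_pos hn.le, hM]
    rw [if_pos (by omega : (0:ℤ) ≤ n - 1)]
    have h1 : n.toNat = (n-1).toNat + 1 := by omega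
    rw [h1, ha]
end

section
/- There exists a constant c such that for every LTL_P formula φ, the size (number of symbols, counting each propositional variable, connective and temporal operator as one symbol) of the pure-future translation φ^ℕ is at most c times the size of φ; in particular the number of propositional variables of the alphabet Σ_φ equals twice the number of distinct propositional variables occurring in φ plus twice the number of distinct temporal subformulas of φ. -/
/-- Size (number of symbols) of an LTL_P formula: each variable, connective and temporal
operator counts as one symbol. -/
def sizeP {V : Type} : LTLP V → ℕ
  | .var _    => 1
  | .neg ψ    => sizeP ψ + 1
  | .conj ψ χ => sizeP ψ + sizeP χ + 1
  | .nextF ψ  => sizeP ψ + 1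
  | .nextP ψ  => sizeP ψ + 1
  | .diaF ψ   => sizeP ψ + 1
  | .diaP ψ   => sizeP ψ + 1

/-- Size (number of symbols) of a pure-future formula. -/
def sizeF {W : Type} : LTLF W → ℕ
  | .var _    => 1
  | .neg ψ    => sizeF ψ + 1
  | .conj ψ χ => sizeF ψ + sizeF χ + 1
  | .nextF ψ  => sizeF ψ + 1
  | .diaF ψ   => sizeF ψ + 1

/-- `f ∨ g := ¬(¬f ∧ ¬g)`. -/
def orF {W : Type} (f g : LTLF W) : LTLF W := .neg (.conj (.neg f) (.neg g))

/-- `f → g := ¬(f ∧ ¬g)`. -/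
def impF {W : Type} (f g : LTLF W) : LTLF W := .neg (.conj f (.neg g))

/-- `f ↔ g := (f → g) ∧ (g → f)`. -/
def iffF {W : Type} (f g : LTLF W) : LTLF W := .conj (impF f g) (impF g f)

/-- `□_F f := ¬◇_F¬f`. -/
def boxFF {W : Type} (f : LTLF W) : LTLF W := .neg (.diaF (.neg f))

/-- Conjunction of a nonempty list of formulas. -/
def listConj {W : Type} : LTLF W → List (LTLF W) → LTLF W
  | a, []     => a
  | a, b :: l => .conj a (listConj b l)

/-- The (finite) set of distinct propositional variables occurring in `φ`. -/
def propVars {V : Type} [DecidableEq V] : LTLP V → Finset V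
  | .var p    => {p}
  | .neg ψ    => propVars ψ
  | .conj ψ χ => propVars ψ ∪ propVars χ
  | .nextF ψ  => propVars ψ
  | .nextP ψ  => propVars ψ
  | .diaF ψ   => propVars ψ
  | .diaP ψ   => propVars ψ

/-- The (finite) set of distinct temporal subformulas of `φ`. -/
def tempSubs {V : Type} [DecidableEq V] : LTLP V → Finset (LTLP V)
  | .var _    => ∅
  | .neg ψ    => tempSubs ψ
  | .conj ψ χ => tempSubs ψ ∪ tempSubs χ
  | .nextF ψ  => insert (.nextF ψ) (tempSubs ψ)
  | .nextP ψ  => insert (.nextP ψ) (tempSubs ψ)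
  | .diaF ψ   => insert (.diaF ψ) (tempSubs ψ)
  | .diaP ψ   => insert (.diaP ψ) (tempSubs ψ)

/-- The propositional variables of the alphabet Σ_φ: `p₊, p₋` for each propositional
variable `p` of `φ` and `A₊^{Oψ}, A₋^{Oψ}` for each temporal subformula `Oψ` of `φ`. -/
def sigmaVars {V : Type} [DecidableEq V] (φ : LTLP V) : Finset (Alph V) :=
  (propVars φ).image Alph.pos ∪ (propVars φ).image Alph.negv ∪
    (tempSubs φ).image Alph.Apos ∪ (tempSubs φ).image Alph.Aneg

/-- The clause of part (iii) of the pure-future translation for a temporal subformula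
(arbitrary for non-temporal formulas, where it is never used). -/
def clauseF {V : Type} : LTLP V → LTLF (Alph V)
  | .nextF ψ =>
      .conj (iffF (.nextF (.var (.Aneg (.nextF ψ)))) (bar false ψ))
            (iffF (.var (.Apos (.nextF ψ))) (.nextF (bar true ψ)))
  | .nextP ψ =>
      .conj (iffF (.nextF (.var (.Apos (.nextP ψ)))) (bar true ψ))
            (iffF (.var (.Aneg (.nextP ψ))) (.nextF (bar false ψ)))
  | .diaF ψ =>
      .conj (iffF (.nextF (.var (.Aneg (.diaF ψ))))
                  (orF (.var (.Aneg (.diaF ψ))) (.nextF (bar false ψ))))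
            (iffF (.var (.Apos (.diaF ψ))) (.diaF (bar true ψ)))
  | .diaP ψ =>
      .conj (iffF (.nextF (.var (.Apos (.diaP ψ))))
                  (orF (.var (.Apos (.diaP ψ))) (.nextF (bar true ψ))))
            (iffF (.var (.Aneg (.diaP ψ))) (.diaF (bar false ψ)))
  | ξ => bar true ξ

/-- The pure-future translation `φ^ℕ`, as a pure-future formula over Σ_φ: the conjunction
of (i) `φ̄₊`, (ii) `v₊ ↔ v₋` for all variable pairs of Σ_φ, and (iii) `□_F` of the clauses
for all temporal subformulas of `φ`. -/
noncomputable def transN {V : Type} [DecidableEq V] (φ : LTLP V) : LTLF (Alph V) :=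
  let pairs : List (LTLF (Alph V)) :=
    ((propVars φ).toList.map fun p => iffF (.var (.pos p)) (.var (.negv p))) ++
    ((tempSubs φ).toList.map fun ξ => iffF (.var (.Apos ξ)) (.var (.Aneg ξ)))
  match (tempSubs φ).toList.map clauseF with
  | []      => listConj (bar true φ) pairs
  | c :: cs => listConj (bar true φ) (pairs ++ [boxFF (listConj c cs)])


section Aux

/-- Size of `bar s φ` (independent of `s`). -/
def barSize {V : Type} : LTLP V → ℕ
  | .var _    => 1
  | .neg ψ    => barSize ψ + 1
  | .conj ψ χ => barSize ψ + barSize χ + 1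
  | .nextF _  => 1
  | .nextP _  => 1
  | .diaF _   => 1
  | .diaP _   => 1

lemma sizeF_bar {V : Type} (s : Bool) (φ : LTLP V) : sizeF (bar s φ) = barSize φ := by
  induction φ <;> cases s <;> simp [bar, sizeF, barSize, *]

/-- `barSize` of the body of a temporal formula. -/
def innerSize {V : Type} : LTLP V → ℕ
  | .nextF ψ => barSize ψ
  | .nextP ψ => barSize ψ
  | .diaF ψ  => barSize ψ
  | .diaP ψ  => barSize ψ
  | _        => 0

lemma finsetSumToList {α : Type} [DecidableEq α] (s : Finset α) (f : α → ℕ) :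
    (s.toList.map f).sum = ∑ x ∈ s, f x := by
  rw [Finset.sum, ← Multiset.coe_toList s.val, Multiset.map_coe, Multiset.sum_coe]; rfl

lemma sumUnionLe {α : Type} [DecidableEq α] (s t : Finset α) (f : α → ℕ) :
    ∑ x ∈ s ∪ t, f x ≤ ∑ x ∈ s, f x + ∑ x ∈ t, f x := by
  have := Finset.sum_union_inter (s₁ := s) (s₂ := t) (f := f); omega

lemma sumInsertLe {α : Type} [DecidableEq α] (a : α) (s : Finset α) (f : α → ℕ) :
    ∑ x ∈ insert a s, f x ≤ f a + ∑ x ∈ s, f x := by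
  by_cases h : a ∈ s
  · rw [Finset.insert_eq_self.2 h]; omega
  · rw [Finset.sum_insert h]

lemma listSumConst {α : Type} (l : List α) (c : ℕ) :
    (l.map fun _ => c).sum = c * l.length := by
  induction l with
  | nil => simp
  | cons a l ih => simp [ih, Nat.mul_succ]; ring

lemma sizeF_listConj {W : Type} (a : LTLF W) (l : List (LTLF W)) :
    sizeF (listConj a l) = sizeF a + (l.map sizeF).sum + l.length := by
  induction l generalizing a with
  | nil => simp [listConj]
  | cons b l ih => simp [listConj, sizeF, ih]; omega

lemma sizeP_pos {V : Type} (φ : LTLP V) : 1 ≤ sizeP φ := by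
  cases φ <;> simp [sizeP]

lemma card_propVars_le {V : Type} [DecidableEq V] (φ : LTLP V) :
    (propVars φ).card ≤ sizeP φ := by
  induction φ with
  | var p => simp [propVars, sizeP]
  | conj ψ χ ihψ ihχ =>
      simp only [propVars, sizeP]
      have := Finset.card_union_le (propVars ψ) (propVars χ); omega
  | neg ψ ih => simp only [propVars, sizeP]; omega
  | nextF ψ ih => simp only [propVars, sizeP]; omega
  | nextP ψ ih => simp only [propVars, sizeP]; omega
  | diaF ψ ih => simp only [propVars, sizeP]; omega
  | diaP ψ ih => simp only [propVars, sizeP]; omega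

lemma card_tempSubs_le {V : Type} [DecidableEq V] (φ : LTLP V) :
    (tempSubs φ).card ≤ sizeP φ := by
  induction φ with
  | var p => simp [tempSubs, sizeP]
  | conj ψ χ ihψ ihχ =>
      simp only [tempSubs, sizeP]
      have := Finset.card_union_le (tempSubs ψ) (tempSubs χ); omega
  | neg ψ ih => simp only [tempSubs, sizeP]; omega
  | nextF ψ ih =>
      simp only [tempSubs, sizeP]
      have := Finset.card_insert_le (LTLP.nextF ψ) (tempSubs ψ); omega
  | nextP ψ ih =>
      simp only [tempSubs, sizeP]
      have := Finset.card_insert_le (LTLP.nextP ψ) (tempSubs ψ); omega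
  | diaF ψ ih =>
      simp only [tempSubs, sizeP]
      have := Finset.card_insert_le (LTLP.diaF ψ) (tempSubs ψ); omega
  | diaP ψ ih =>
      simp only [tempSubs, sizeP]
      have := Finset.card_insert_le (LTLP.diaP ψ) (tempSubs ψ); omega

lemma inner_sum_le {V : Type} [DecidableEq V] (φ : LTLP V) :
    barSize φ + ∑ ξ ∈ tempSubs φ, innerSize ξ ≤ sizeP φ := by
  induction φ with
  | var p => simp [barSize, tempSubs, sizeP]
  | neg ψ ih => simp only [barSize, tempSubs, sizeP]; omega
  | conj ψ χ ihψ ihχ =>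
      simp only [barSize, tempSubs, sizeP]
      have := sumUnionLe (tempSubs ψ) (tempSubs χ) (innerSize (V := V)); omega
  | nextF ψ ih =>
      simp only [barSize, tempSubs, sizeP]
      have := sumInsertLe (LTLP.nextF ψ) (tempSubs ψ) (innerSize (V := V))
      rw [show innerSize (LTLP.nextF ψ) = barSize ψ from rfl] at this; omega
  | nextP ψ ih =>
      simp only [barSize, tempSubs, sizeP]
      have := sumInsertLe (LTLP.nextP ψ) (tempSubs ψ) (innerSize (V := V))
      rw [show innerSize (LTLP.nextP ψ) = barSize ψ from rfl] at this; omega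
  | diaF ψ ih =>
      simp only [barSize, tempSubs, sizeP]
      have := sumInsertLe (LTLP.diaF ψ) (tempSubs ψ) (innerSize (V := V))
      rw [show innerSize (LTLP.diaF ψ) = barSize ψ from rfl] at this; omega
  | diaP ψ ih =>
      simp only [barSize, tempSubs, sizeP]
      have := sumInsertLe (LTLP.diaP ψ) (tempSubs ψ) (innerSize (V := V))
      rw [show innerSize (LTLP.diaP ψ) = barSize ψ from rfl] at this; omega

lemma tempSubs_temporal {V : Type} [DecidableEq V] (φ : LTLP V) :
    ∀ ξ ∈ tempSubs φ, ξ.isTemporal := by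
  induction φ with
  | var p => simp [tempSubs]
  | neg ψ ih => simpa [tempSubs] using ih
  | conj ψ χ ihψ ihχ =>
      intro ξ hξ
      rcases Finset.mem_union.1 hξ with h | h
      · exact ihψ ξ h
      · exact ihχ ξ h
  | nextF ψ ih =>
      intro ξ hξ
      rcases Finset.mem_insert.1 hξ with rfl | h
      · trivial
      · exact ih ξ h
  | nextP ψ ih =>
      intro ξ hξ
      rcases Finset.mem_insert.1 hξ with rfl | h
      · trivial
      · exact ih ξ h
  | diaF ψ ih =>
      intro ξ hξ
      rcases Finset.mem_insert.1 hξ with rfl | h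
      · trivial
      · exact ih ξ h
  | diaP ψ ih =>
      intro ξ hξ
      rcases Finset.mem_insert.1 hξ with rfl | h
      · trivial
      · exact ih ξ h

lemma clause_bound {V : Type} (ξ : LTLP V) (h : ξ.isTemporal) :
    sizeF (clauseF ξ) ≤ 4 * innerSize ξ + 40 := by
  cases ξ with
  | nextF ψ => simp [clauseF, iffF, impF, orF, sizeF, sizeF_bar, innerSize]; omega
  | nextP ψ => simp [clauseF, iffF, impF, orF, sizeF, sizeF_bar, innerSize]; omega
  | diaF ψ => simp [clauseF, iffF, impF, orF, sizeF, sizeF_bar, innerSize]; omega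
  | diaP ψ => simp [clauseF, iffF, impF, orF, sizeF, sizeF_bar, innerSize]; omega
  | var p => exact absurd h (by simp [LTLP.isTemporal])
  | neg ψ => exact absurd h (by simp [LTLP.isTemporal])
  | conj ψ χ => exact absurd h (by simp [LTLP.isTemporal])

lemma sigma_card {V : Type} [DecidableEq V] (φ : LTLP V) :
    (sigmaVars φ).card = 2 * (propVars φ).card + 2 * (tempSubs φ).card := by
  have hpos : Function.Injective (Alph.pos (V := V)) := fun a b h => by injection h
  have hneg : Function.Injective (Alph.negv (V := V)) := fun a b h => by injection h
  have hApos : Function.Injective (Alph.Apos (V := V)) := fun a b h => by injection h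
  have hAneg : Function.Injective (Alph.Aneg (V := V)) := fun a b h => by injection h
  unfold sigmaVars
  rw [Finset.card_union_of_disjoint, Finset.card_union_of_disjoint,
    Finset.card_union_of_disjoint, Finset.card_image_of_injective _ hpos,
    Finset.card_image_of_injective _ hneg, Finset.card_image_of_injective _ hApos,
    Finset.card_image_of_injective _ hAneg]
  · ring
  all_goals
    rw [Finset.disjoint_left]
    intro a ha hb
    simp only [Finset.mem_union, Finset.mem_image] at ha hb
    aesop

end Aux

/-- there is a constant `c` such that for every LTL_P formula `φ` the size
of `φ^ℕ` is at most `c` times the size of `φ`; in particular, the number of propositional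
variables of Σ_φ equals twice the number of distinct propositional variables of `φ` plus
twice the number of distinct temporal subformulas of `φ`. -/
theorem transN_linear_size {V : Type} [DecidableEq V] :
    ∃ c : ℕ, ∀ φ : LTLP V,
      sizeF (transN φ) ≤ c * sizeP φ ∧
      (sigmaVars φ).card = 2 * (propVars φ).card + 2 * (tempSubs φ).card := by
  refine ⟨100, fun φ => ⟨?_, sigma_card φ⟩⟩
  have hs1 : 1 ≤ sizeP φ := sizeP_pos φ
  have hP : (propVars φ).card ≤ sizeP φ := card_propVars_le φ
  have hT : (tempSubs φ).card ≤ sizeP φ := card_tempSubs_le φ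
  have hI : barSize φ + ∑ ξ ∈ tempSubs φ, innerSize ξ ≤ sizeP φ := inner_sum_le φ
  have hbar : sizeF (bar true φ) = barSize φ := sizeF_bar true φ
  have hpairs1 :
      (((propVars φ).toList.map fun p =>
        iffF (LTLF.var (Alph.pos p)) (LTLF.var (Alph.negv p))).map sizeF).sum
        = 11 * (propVars φ).card := by
    rw [List.map_map]
    have h : (sizeF ∘ fun p : V =>
        iffF (LTLF.var (Alph.pos p)) (LTLF.var (Alph.negv p))) = fun _ => 11 := by
      funext p; rfl
    rw [h, listSumConst, Finset.length_toList]
  have hpairs2 :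
      (((tempSubs φ).toList.map fun ξ =>
        iffF (LTLF.var (Alph.Apos ξ)) (LTLF.var (Alph.Aneg ξ))).map sizeF).sum
        = 11 * (tempSubs φ).card := by
    rw [List.map_map]
    have h : (sizeF ∘ fun ξ : LTLP V =>
        iffF (LTLF.var (Alph.Apos ξ)) (LTLF.var (Alph.Aneg ξ))) = fun _ => 11 := by
      funext ξ; rfl
    rw [h, listSumConst, Finset.length_toList]
  have hCS : (((tempSubs φ).toList.map clauseF).map sizeF).sum
      ≤ 4 * sizeP φ + 40 * (tempSubs φ).card := by
    rw [List.map_map, finsetSumToList (tempSubs φ) (sizeF ∘ clauseF)]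
    calc ∑ ξ ∈ tempSubs φ, (sizeF ∘ clauseF) ξ
        ≤ ∑ ξ ∈ tempSubs φ, (4 * innerSize ξ + 40) :=
          Finset.sum_le_sum fun ξ hξ => clause_bound ξ (tempSubs_temporal φ ξ hξ)
      _ = 4 * (∑ ξ ∈ tempSubs φ, innerSize ξ) + 40 * (tempSubs φ).card := by
          rw [Finset.sum_add_distrib, Finset.sum_const, ← Finset.mul_sum]
          simp [mul_comm]
      _ ≤ 4 * sizeP φ + 40 * (tempSubs φ).card := by omega
  have hlen1 : ((propVars φ).toList.map fun p =>
      iffF (LTLF.var (Alph.pos p)) (LTLF.var (Alph.negv p))).length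
      = (propVars φ).card := by rw [List.length_map, Finset.length_toList]
  have hlen2 : ((tempSubs φ).toList.map fun ξ =>
      iffF (LTLF.var (Alph.Apos ξ)) (LTLF.var (Alph.Aneg ξ))).length
      = (tempSubs φ).card := by rw [List.length_map, Finset.length_toList]
  rcases hL : (tempSubs φ).toList.map clauseF with - | ⟨c, cs⟩ <;>
    simp only [transN, hL]
  · rw [sizeF_listConj, List.map_append, List.sum_append, List.length_append,
      hpairs1, hpairs2, hlen1, hlen2, hbar]
    omega
  · have hlenc : cs.length + 1 = (tempSubs φ).card := by
      have := congrArg List.length hL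
      simp [Finset.length_toList] at this
      omega
    have hsumc : sizeF c + (cs.map sizeF).sum ≤ 4 * sizeP φ + 40 * (tempSubs φ).card := by
      rw [hL] at hCS
      simpa using hCS
    rw [sizeF_listConj, List.map_append, List.sum_append, List.length_append,
      List.map_append, List.sum_append, List.length_append,
      hpairs1, hpairs2, hlen1, hlen2, hbar]
    have hbox : sizeF (boxFF (listConj c cs)) =
        sizeF c + (cs.map sizeF).sum + cs.length + 3 := by
      simp [boxFF, sizeF, sizeF_listConj]
    simp only [List.map_cons, List.map_nil, List.sum_cons, List.sum_nil,
      List.length_cons, List.length_nil, hbox]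
    omega
end
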